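/- arXiv:2501.09708 — 4 statements merged into one kernel-verified Lean document; each statement's English description precedes it below -/
import Mathlib

section
/- Let ρ_ABC be a density matrix on H_A ⊗ H_B ⊗ H_C with ρ_B invertible and set η_ABC := (1/d_B) ρ_B^{-1/2} ρ_ABC ρ_B^{-1/2}. If the marginals η_AB and η_BC commute and ρ_ABC = d_B^2 ρ_B^{1/2} η_AB η_BC ρ_B^{1/2}, then η_B = tr_{AC} η_ABC equals the maximally mixed state I_B/d_B and η_ABC = η_AB^{1/2} η_B^{-1/2} η_BC η_B^{-1/2} η_AB^{1/2}, i.e., η_ABC satisfies the Petz recovery condition (quantum Markov chain condition). -/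
open Matrix BigOperators
open scoped Kronecker ComplexOrder

noncomputable section

/-- The positive semidefinite square root of a positive semidefinite matrix
(the Mathlib definition of December 2024, since removed from Mathlib). -/
def Matrix.PosSemidef.sqrt {n 𝕜 : Type*} [Fintype n] [RCLike 𝕜] [DecidableEq n]
    {A : Matrix n n 𝕜} (hA : A.PosSemidef) : Matrix n n 𝕜 :=
  (hA.1.eigenvectorUnitary : Matrix n n 𝕜) *
    diagonal ((↑) ∘ (Real.sqrt ·) ∘ hA.1.eigenvalues) *
    (star hA.1.eigenvectorUnitary : Matrix n n 𝕜)

namespace Matrix.PosSemidef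

open scoped MatrixOrder

lemma sqrt_eq_cfcSqrt {n : Type*} [Fintype n] [DecidableEq n] {A : Matrix n n ℂ}
    (hA : A.PosSemidef) : hA.sqrt = CFC.sqrt A := by
  rw [CFC.sqrt_eq_real_sqrt A hA.nonneg, cfcₙ_eq_cfc, hA.1.cfc_eq, IsHermitian.cfc,
    Unitary.conjStarAlgAut_apply]
  rfl

lemma sqrt_mul_self {n : Type*} [Fintype n] [DecidableEq n] {A : Matrix n n ℂ}
    (hA : A.PosSemidef) : hA.sqrt * hA.sqrt = A := by
  rw [sqrt_eq_cfcSqrt]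
  exact CFC.sqrt_mul_sqrt_self A hA.nonneg

lemma posSemidef_sqrt {n : Type*} [Fintype n] [DecidableEq n] {A : Matrix n n ℂ}
    (hA : A.PosSemidef) : hA.sqrt.PosSemidef := by
  rw [sqrt_eq_cfcSqrt]
  exact (CFC.sqrt_nonneg A).posSemidef

lemma eq_sqrt_of_sq_eq {n : Type*} [Fintype n] [DecidableEq n] {A : Matrix n n ℂ}
    (hA : A.PosSemidef) (B : Matrix n n ℂ) (hB : B.PosSemidef) (hAB : A ^ 2 = B) :
    A = hB.sqrt := by
  rw [sqrt_eq_cfcSqrt, eq_comm, CFC.sqrt_eq_iff B A hB.nonneg hA.nonneg, ← sq]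
  exact hAB

end Matrix.PosSemidef

namespace BSQMC

variable {A B C : Type*} [Fintype A] [Fintype B] [Fintype C]
  [DecidableEq A] [DecidableEq B] [DecidableEq C]

/-- Partial trace over the `A` system. -/
def ptA (M : Matrix (A × B × C) (A × B × C) ℂ) : Matrix (B × C) (B × C) ℂ :=
  Matrix.of fun p q => ∑ a : A, M (a, p) (a, q)

/-- Partial trace over the `C` system. -/
def ptC (M : Matrix (A × B × C) (A × B × C) ℂ) : Matrix (A × B) (A × B) ℂ :=
  Matrix.of fun p q => ∑ c : C, M (p.1, p.2, c) (q.1, q.2, c)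

/-- Partial trace over the `A` and `C` systems. -/
def ptAC (M : Matrix (A × B × C) (A × B × C) ℂ) : Matrix B B ℂ :=
  Matrix.of fun b b' => ∑ a : A, ∑ c : C, M (a, b, c) (a, b', c)

/-- `X_B ↦ I_A ⊗ X_B ⊗ I_C`. -/
def embB (X : Matrix B B ℂ) : Matrix (A × B × C) (A × B × C) ℂ :=
  Matrix.of fun p q =>
    (if p.1 = q.1 then (1 : ℂ) else 0) * X p.2.1 q.2.1 * (if p.2.2 = q.2.2 then 1 else 0)

/-- `X_{AB} ↦ X_{AB} ⊗ I_C`. -/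
def embAB (X : Matrix (A × B) (A × B) ℂ) : Matrix (A × B × C) (A × B × C) ℂ :=
  Matrix.of fun p q => X (p.1, p.2.1) (q.1, q.2.1) * (if p.2.2 = q.2.2 then (1 : ℂ) else 0)

/-- `X_{BC} ↦ I_A ⊗ X_{BC}`. -/
def embBC (X : Matrix (B × C) (B × C) ℂ) : Matrix (A × B × C) (A × B × C) ℂ :=
  Matrix.of fun p q => (if p.1 = q.1 then (1 : ℂ) else 0) * X p.2 q.2

set_option linter.unusedSectionVars false in
lemma embB_mul (X Y : Matrix B B ℂ) :
    (embB (X * Y) : Matrix (A × B × C) (A × B × C) ℂ) = embB X * embB Y := by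
  ext ⟨a, b, c⟩ ⟨a', b', c'⟩
  simp [embB, Matrix.mul_apply, Fintype.sum_prod_type, ite_mul, mul_ite,
    Finset.mul_sum, Finset.sum_mul]

set_option linter.unusedSectionVars false in
lemma embAB_mul (X Y : Matrix (A × B) (A × B) ℂ) :
    (embAB (X * Y) : Matrix (A × B × C) (A × B × C) ℂ) = embAB X * embAB Y := by
  ext ⟨a, b, c⟩ ⟨a', b', c'⟩
  simp [embAB, Matrix.mul_apply, Fintype.sum_prod_type, ite_mul, mul_ite,
    Finset.mul_sum, Finset.sum_mul]

set_option linter.unusedSectionVars false in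
lemma embBC_mul (X Y : Matrix (B × C) (B × C) ℂ) :
    (embBC (X * Y) : Matrix (A × B × C) (A × B × C) ℂ) = embBC X * embBC Y := by
  ext ⟨a, b, c⟩ ⟨a', b', c'⟩
  simp [embBC, Matrix.mul_apply, Fintype.sum_prod_type, ite_mul, mul_ite,
    Finset.mul_sum, Finset.sum_mul]

set_option linter.unusedSectionVars false in
lemma embB_one : (embB (1 : Matrix B B ℂ) : Matrix (A × B × C) (A × B × C) ℂ) = 1 := by
  ext ⟨a, b, c⟩ ⟨a', b', c'⟩
  simp [embB, Matrix.one_apply, Prod.ext_iff]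
  split_ifs <;> simp_all

set_option linter.unusedSectionVars false in
lemma embB_smul (r : ℂ) (X : Matrix B B ℂ) :
    (embB (r • X) : Matrix (A × B × C) (A × B × C) ℂ) = r • embB X := by
  ext ⟨a, b, c⟩ ⟨a', b', c'⟩
  simp [embB]

lemma sum_rot {α β γ M : Type*} [AddCommMonoid M] [Fintype α] [Fintype β] [Fintype γ]
    (f : α → β → γ → M) :
    ∑ a : α, ∑ b : β, ∑ c : γ, f a b c = ∑ c : γ, ∑ a : α, ∑ b : β, f a b c := by
  have h1 : ∀ a : α, ∑ b : β, ∑ c : γ, f a b c = ∑ c : γ, ∑ b : β, f a b c :=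
    fun a => Finset.sum_comm
  simp_rw [h1]
  exact Finset.sum_comm

set_option linter.unusedSectionVars false in
lemma embAB_posSemidef {X : Matrix (A × B) (A × B) ℂ} (hX : X.PosSemidef) :
    (embAB X : Matrix (A × B × C) (A × B × C) ℂ).PosSemidef := by
  rw [Matrix.posSemidef_iff_dotProduct_mulVec]
  constructor
  · ext ⟨a, b, c⟩ ⟨a', b', c'⟩
    have h := congrFun (congrFun hX.1 (a, b)) (a', b')
    simp only [conjTranspose_apply] at h
    simp [embAB, conjTranspose_apply, ← h, eq_comm, apply_ite (starRingEnd ℂ)]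
  · intro x
    have key : star x ⬝ᵥ (embAB X *ᵥ x) =
        ∑ c : C, star (fun ab : A × B => x (ab.1, ab.2, c)) ⬝ᵥ
          (X *ᵥ fun ab : A × B => x (ab.1, ab.2, c)) := by
      simp only [dotProduct, mulVec, embAB, of_apply, Fintype.sum_prod_type,
        mul_ite, mul_one, mul_zero, ite_mul, zero_mul, Finset.sum_ite_eq',
        Finset.mem_univ, if_true, Pi.star_apply, Finset.mul_sum]
      simp only [Finset.sum_ite_eq, Finset.sum_ite_eq', Finset.mem_univ, if_true]
      exact sum_rot _
    rw [key]
    exact Finset.sum_nonneg fun c _ => hX.dotProduct_mulVec_nonneg _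

set_option linter.unusedSectionVars false in
lemma ptAC_embAB_mul_embBC (X : Matrix (A × B) (A × B) ℂ) (Y : Matrix (B × C) (B × C) ℂ) :
    ptAC (embAB X * embBC Y) =
      (Matrix.of fun b b' => ∑ a : A, X (a, b) (a, b')) *
        (Matrix.of fun b b' => ∑ c : C, Y (b, c) (b', c)) := by
  ext b b'
  have hentry : ∀ (a : A) (c : C),
      (embAB X * embBC Y : Matrix (A × B × C) (A × B × C) ℂ) (a, b, c) (a, b', c) =
      ∑ b'' : B, X (a, b) (a, b'') * Y (b'', c) (b', c) := by
    intro a c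
    simp [Matrix.mul_apply, embAB, embBC, Fintype.sum_prod_type, ite_mul, mul_ite,
      mul_zero, zero_mul, Finset.sum_ite_eq, Finset.sum_ite_eq', Finset.mul_sum]
  simp only [ptAC, of_apply]
  simp_rw [hentry]
  rw [Matrix.mul_apply]
  simp only [of_apply, Finset.sum_mul, Finset.mul_sum]
  rw [sum_rot fun a c b'' => X (a, b) (a, b'') * Y (b'', c) (b', c)]
  exact Finset.sum_congr rfl fun b'' _ => (by first | rfl | exact Finset.sum_comm)

set_option linter.unusedSectionVars false in
lemma ptAC_smul (r : ℂ) (M : Matrix (A × B × C) (A × B × C) ℂ) :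
    ptAC (r • M) = r • ptAC M := by
  ext b b'
  simp [ptAC, Finset.mul_sum]

lemma commute_sqrt {n : Type*} [Fintype n] [DecidableEq n] {M N : Matrix n n ℂ}
    (hM : M.PosSemidef) (h : M * N = N * M) : hM.sqrt * N = N * hM.sqrt := by
  set U : Matrix n n ℂ := hM.1.eigenvectorUnitary.1 with hU
  have hU1 : star U * U = 1 := Matrix.mem_unitaryGroup_iff'.mp hM.1.eigenvectorUnitary.2
  have hU2 : U * star U = 1 := Matrix.mem_unitaryGroup_iff.mp hM.1.eigenvectorUnitary.2
  have hU1' : ∀ X : Matrix n n ℂ, star U * (U * X) = X := fun X => by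
    rw [← Matrix.mul_assoc, hU1, Matrix.one_mul]
  have hU2' : ∀ X : Matrix n n ℂ, U * (star U * X) = X := fun X => by
    rw [← Matrix.mul_assoc, hU2, Matrix.one_mul]
  set d : n → ℂ := (↑) ∘ hM.1.eigenvalues with hdd
  set N' : Matrix n n ℂ := star U * N * U with hN'
  have hspec : M = U * diagonal d * star U := hM.1.spectral_theorem
  have hDU : diagonal d = star U * M * U := by
    rw [hspec]
    simp only [Matrix.mul_assoc, hU1', hU2']
    rw [hU1, Matrix.mul_one]
  have hdN' : diagonal d * N' = N' * diagonal d := by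
    rw [hDU, hN']
    simp only [Matrix.mul_assoc, hU1', hU2']
    calc star U * (M * (N * U)) = star U * ((M * N) * U) := by simp only [Matrix.mul_assoc]
      _ = star U * ((N * M) * U) := by rw [h]
      _ = star U * (N * (M * U)) := by simp only [Matrix.mul_assoc]
  have key : diagonal ((↑) ∘ Real.sqrt ∘ hM.1.eigenvalues : n → ℂ) * N' =
      N' * diagonal ((↑) ∘ Real.sqrt ∘ hM.1.eigenvalues : n → ℂ) := by
    ext i j
    have hij : d i * N' i j = N' i j * d j := by
      have := congrFun (congrFun hdN' i) j
      simpa [Matrix.diagonal_mul, Matrix.mul_diagonal] using this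
    simp only [Matrix.diagonal_mul, Matrix.mul_diagonal, Function.comp_apply]
    rcases eq_or_ne (hM.1.eigenvalues i) (hM.1.eigenvalues j) with he | he
    · rw [he, mul_comm]
    · have h0 : N' i j = 0 := by
        have hne : d i ≠ d j := by
          simp only [hdd, Function.comp_apply, ne_eq, Complex.ofReal_inj]
          exact he
        rw [mul_comm (N' i j) (d j)] at hij
        have h2 := sub_eq_zero.mpr hij
        rw [← sub_mul] at h2
        rcases mul_eq_zero.mp h2 with h' | h'
        · exact absurd (sub_eq_zero.mp h') hne
        · exact h'
      simp [h0]
  have hsqrt : hM.sqrt = U * diagonal ((↑) ∘ Real.sqrt ∘ hM.1.eigenvalues : n → ℂ) * star U :=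
    rfl
  rw [hsqrt]
  have hNU : star U * N = N' * star U := by
    rw [hN']
    simp only [Matrix.mul_assoc]
    rw [hU2, Matrix.mul_one]
  have hUN : N * U = U * N' := by
    rw [hN']
    simp only [← Matrix.mul_assoc, hU2]
    rw [Matrix.one_mul]
  calc U * diagonal ((↑) ∘ Real.sqrt ∘ hM.1.eigenvalues : n → ℂ) * star U * N
      = U * (diagonal ((↑) ∘ Real.sqrt ∘ hM.1.eigenvalues : n → ℂ) * (N' * star U)) := by
        rw [← hNU]; simp only [Matrix.mul_assoc]
    _ = U * ((diagonal ((↑) ∘ Real.sqrt ∘ hM.1.eigenvalues : n → ℂ) * N') * star U) := by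
        simp only [Matrix.mul_assoc]
    _ = U * (N' * (diagonal ((↑) ∘ Real.sqrt ∘ hM.1.eigenvalues : n → ℂ) * star U)) := by
        rw [key]; simp only [Matrix.mul_assoc]
    _ = (U * N') * (diagonal ((↑) ∘ Real.sqrt ∘ hM.1.eigenvalues : n → ℂ) * star U) := by
        simp only [Matrix.mul_assoc]
    _ = N * (U * diagonal ((↑) ∘ Real.sqrt ∘ hM.1.eigenvalues : n → ℂ) * star U) := by
        rw [← hUN]; simp only [Matrix.mul_assoc]

theorem commuting_form_implies_eta_qmc
    (ρ : Matrix (A × B × C) (A × B × C) ℂ)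
    (hρ : ρ.PosSemidef) (htr : ρ.trace = 1)
    (hB : (ptAC ρ).PosDef)
    (η : Matrix (A × B × C) (A × B × C) ℂ)
    (hη : η = (Fintype.card B : ℂ)⁻¹ •
      (embB hB.inv.posSemidef.sqrt * ρ * embB hB.inv.posSemidef.sqrt))
    (hηAB : (ptC η).PosSemidef) (hηB : (ptAC η).PosDef)
    (hcomm : Commute (embAB (ptC η)) (embBC (ptA η)))
    (hform : ρ = ((Fintype.card B : ℂ) ^ 2) •
      (embB hB.posSemidef.sqrt * embAB (ptC η) * embBC (ptA η) *
        embB hB.posSemidef.sqrt)) :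
    ptAC η = (Fintype.card B : ℂ)⁻¹ • (1 : Matrix B B ℂ) ∧
      η = embAB hηAB.sqrt * embB hηB.inv.posSemidef.sqrt * embBC (ptA η) *
        embB hηB.inv.posSemidef.sqrt * embAB hηAB.sqrt := by
  rcases isEmpty_or_nonempty B with hBe | hBne
  · constructor
    · ext b b'
      exact isEmptyElim b
    · ext p q
      exact isEmptyElim p.2.1
  · set dB : ℂ := (Fintype.card B : ℂ) with hdB
    have hd0 : dB ≠ 0 := by
      rw [hdB]
      exact_mod_cast Nat.cast_ne_zero.mpr Fintype.card_ne_zero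
    set S := hB.posSemidef.sqrt with hS
    have hSS : S * S = ptAC ρ := hB.posSemidef.sqrt_mul_self
    have hdetS : IsUnit S.det := by
      have h1 : S.det * S.det = (ptAC ρ).det := by rw [← Matrix.det_mul, hSS]
      have h2 : (ptAC ρ).det ≠ 0 := hB.det_pos.ne'
      have h3 : S.det ≠ 0 := fun h0 => h2 (by rw [← h1, h0, mul_zero])
      exact h3.isUnit
    have hSinv : hB.inv.posSemidef.sqrt = S⁻¹ := by
      symm
      apply Matrix.PosSemidef.eq_sqrt_of_sq_eq hB.posSemidef.posSemidef_sqrt.inv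
      rw [pow_two, ← Matrix.mul_inv_rev, hSS]
    have hS1 : S⁻¹ * S = 1 := Matrix.nonsing_inv_mul S hdetS
    have hS2 : S * S⁻¹ = 1 := Matrix.mul_nonsing_inv S hdetS
    have hEF : (embB (S⁻¹) : Matrix (A × B × C) (A × B × C) ℂ) * embB S = 1 := by
      rw [← embB_mul, hS1, embB_one]
    have hFE : (embB S : Matrix (A × B × C) (A × B × C) ℂ) * embB (S⁻¹) = 1 := by
      rw [← embB_mul, hS2, embB_one]
    rw [hSinv, hform] at hη
    rw [Matrix.mul_smul, Matrix.smul_mul, smul_smul] at hη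
    have hc : dB⁻¹ * dB ^ 2 = dB := by
      rw [sq, ← mul_assoc, inv_mul_cancel₀ hd0, one_mul]
    rw [hc] at hη
    have hη' : η = dB • (embAB (ptC η) * embBC (ptA η)) := by
      conv_lhs => rw [hη]
      congr 1
      calc embB (S⁻¹) * (embB S * embAB (ptC η) * embBC (ptA η) * embB S) * embB (S⁻¹)
          = (embB (S⁻¹) * embB S) *
              (embAB (ptC η) * (embBC (ptA η) * (embB S * embB (S⁻¹)))) := by
            simp only [Matrix.mul_assoc]
        _ = embAB (ptC η) * embBC (ptA η) := by
            rw [hEF, hFE, Matrix.mul_one, Matrix.one_mul]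
    -- goal 1
    have hBt1 : (Matrix.of fun b b' => ∑ a : A, (ptC η) (a, b) (a, b')) = ptAC η := by
      ext b b'
      simp [ptC, ptAC]
    have hBt2 : (Matrix.of fun b b' => ∑ c : C, (ptA η) (b, c) (b', c)) = ptAC η := by
      ext b b'
      simp only [ptA, ptAC, of_apply]
      exact Finset.sum_comm
    have hsq : ptAC η = dB • (ptAC η * ptAC η) := by
      conv_lhs => rw [hη']
      rw [ptAC_smul, ptAC_embAB_mul_embBC, hBt1, hBt2]
    have hdet : IsUnit (ptAC η).det := hηB.det_pos.ne'.isUnit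
    have hone : (1 : Matrix B B ℂ) = dB • ptAC η := by
      have h3 := congrArg (fun M => M * (ptAC η)⁻¹) hsq
      simp only [Matrix.smul_mul] at h3
      rw [Matrix.mul_nonsing_inv _ hdet, Matrix.mul_assoc,
        Matrix.mul_nonsing_inv _ hdet, Matrix.mul_one] at h3
      exact h3
    have goal1 : ptAC η = dB⁻¹ • (1 : Matrix B B ℂ) := by
      rw [hone, smul_smul, inv_mul_cancel₀ hd0, one_smul]
    refine ⟨goal1, ?_⟩
    -- goal 2
    have hinv : (ptAC η)⁻¹ = dB • (1 : Matrix B B ℂ) := by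
      apply Matrix.inv_eq_left_inv
      rw [goal1, Matrix.smul_mul, Matrix.mul_smul, Matrix.one_mul, smul_smul,
        mul_inv_cancel₀ hd0, one_smul]
    set s : ℝ := Real.sqrt (Fintype.card B) with hs
    have hs2 : ((s : ℂ)) * (s : ℂ) = dB := by
      rw [← Complex.ofReal_mul, hs, Real.mul_self_sqrt (Nat.cast_nonneg _), hdB]
      simp
    have hsmulPSD : (((s : ℂ)) • (1 : Matrix B B ℂ)).PosSemidef := by
      have h1 : ((s : ℂ)) • (1 : Matrix B B ℂ) = Matrix.diagonal (fun _ => (s : ℂ)) := by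
        ext i j
        by_cases hij : i = j <;> simp [hij, Matrix.one_apply, Matrix.diagonal]
      rw [h1]
      refine Matrix.PosSemidef.diagonal ?_
      intro i
      simp only [Pi.zero_apply]
      exact Complex.zero_le_real.mpr (Real.sqrt_nonneg _)
    have hsqrtinv : hηB.inv.posSemidef.sqrt = ((s : ℂ)) • (1 : Matrix B B ℂ) := by
      symm
      apply Matrix.PosSemidef.eq_sqrt_of_sq_eq hsmulPSD
      rw [pow_two, Matrix.smul_mul, Matrix.one_mul, smul_smul, hs2, ← hinv]
    have hembs : (embB (((s : ℂ)) • (1 : Matrix B B ℂ)) : Matrix (A × B × C) (A × B × C) ℂ) =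
        ((s : ℂ)) • 1 := by
      rw [embB_smul, embB_one]
    have hT : (embAB hηAB.sqrt : Matrix (A × B × C) (A × B × C) ℂ) =
        (embAB_posSemidef hηAB).sqrt := by
      apply Matrix.PosSemidef.eq_sqrt_of_sq_eq (embAB_posSemidef hηAB.posSemidef_sqrt)
      rw [pow_two, ← embAB_mul, hηAB.sqrt_mul_self]
    have hcommT : (embAB hηAB.sqrt : Matrix (A × B × C) (A × B × C) ℂ) * embBC (ptA η) =
        embBC (ptA η) * embAB hηAB.sqrt := by
      rw [hT]
      exact commute_sqrt (embAB_posSemidef hηAB) hcomm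
    rw [hsqrtinv, hembs]
    simp only [Matrix.mul_smul, Matrix.smul_mul, Matrix.mul_one, smul_smul]
    rw [hs2]
    conv_lhs => rw [hη']
    congr 1
    calc embAB (ptC η) * embBC (ptA η)
        = embBC (ptA η) * embAB (ptC η) := hcomm.eq
      _ = embBC (ptA η) * embAB (hηAB.sqrt * hηAB.sqrt) := by rw [hηAB.sqrt_mul_self]
      _ = embBC (ptA η) * (embAB hηAB.sqrt * embAB hηAB.sqrt) := by rw [embAB_mul]
      _ = (embBC (ptA η) * embAB hηAB.sqrt) * embAB hηAB.sqrt := by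
          rw [Matrix.mul_assoc]
      _ = (embAB hηAB.sqrt * embBC (ptA η)) * embAB hηAB.sqrt := by rw [hcommT]
end BSQMC
end
end

section
/- Let ρ, σ be positive semidefinite matrices with σ invertible and T a completely positive trace-preserving map with T(σ) invertible. If ρ^2 = σ T*(T(σ)^{-1} T(ρ)^2 T(σ)^{-1}) σ, then tr[ρ^2 σ^{-1}] = tr[T(ρ)^2 T(σ)^{-1}]. -/
open Matrix BigOperators
open scoped Kronecker ComplexOrder

noncomputable section

namespace BSQMC

variable {H K : Type*} [Fintype H] [DecidableEq H] [Fintype K] [DecidableEq K]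

/-- The `n`-fold amplification `id_n ⊗ T` of a linear map on matrices. -/
def amplify (nn : ℕ) (T : Matrix H H ℂ →ₗ[ℂ] Matrix K K ℂ)
    (M : Matrix (Fin nn × H) (Fin nn × H) ℂ) : Matrix (Fin nn × K) (Fin nn × K) ℂ :=
  Matrix.of fun p q => T (Matrix.of fun h h' => M (p.1, h) (q.1, h')) p.2 q.2

/-- Complete positivity of a linear map on matrices. -/
def IsCompletelyPositive (T : Matrix H H ℂ →ₗ[ℂ] Matrix K K ℂ) : Prop :=
  ∀ (nn : ℕ) (M : Matrix (Fin nn × H) (Fin nn × H) ℂ),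
    M.PosSemidef → (amplify nn T M).PosSemidef

/-- Trace preservation. -/
def IsTracePreserving (T : Matrix H H ℂ →ₗ[ℂ] Matrix K K ℂ) : Prop :=
  ∀ M : Matrix H H ℂ, (T M).trace = M.trace

/-- `S` is the Hilbert-Schmidt adjoint of `T`. -/
def IsAdjointPair (T : Matrix H H ℂ →ₗ[ℂ] Matrix K K ℂ)
    (S : Matrix K K ℂ →ₗ[ℂ] Matrix H H ℂ) : Prop :=
  ∀ (X : Matrix H H ℂ) (Y : Matrix K K ℂ), (S Y * X).trace = (Y * T X).trace

theorem IsAdjointPair.trace_mul_apply {m n : Type*} [Fintype m] [Fintype n]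
    {T : Matrix m m ℂ →ₗ[ℂ] Matrix n n ℂ} {S : Matrix n n ℂ →ₗ[ℂ] Matrix m m ℂ}
    (h : IsAdjointPair T S) (X : Matrix m m ℂ) (Y : Matrix n n ℂ) :
    (X * S Y).trace = (T X * Y).trace := by
  rw [trace_mul_comm, h, trace_mul_comm]

theorem trace_mul_inv_mul_mul_inv {n R : Type*} [Fintype n] [DecidableEq n] [CommRing R]
    {A : Matrix n n R} (hA : IsUnit A.det) (P : Matrix n n R) :
    (A * (A⁻¹ * P * A⁻¹)).trace = (P * A⁻¹).trace := by
  rw [mul_assoc, mul_nonsing_inv_cancel_left A _ hA]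

theorem symmetric_recovery_implies_trace_identity_general
    (T : Matrix H H ℂ →ₗ[ℂ] Matrix K K ℂ) (Tad : Matrix K K ℂ →ₗ[ℂ] Matrix H H ℂ)
    (hadj : IsAdjointPair T Tad)
    (ρ σ : Matrix H H ℂ)
    (hσ : σ.PosDef) (hTσ : (T σ).PosDef)
    (hrec : ρ * ρ = σ * Tad ((T σ)⁻¹ * (T ρ * T ρ) * (T σ)⁻¹) * σ) :
    (ρ * ρ * σ⁻¹).trace = (T ρ * T ρ * (T σ)⁻¹).trace := by
  calc (ρ * ρ * σ⁻¹).trace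
      = (σ * Tad ((T σ)⁻¹ * (T ρ * T ρ) * (T σ)⁻¹)).trace := by
        rw [hrec, mul_nonsing_inv_cancel_right σ _ hσ.det_pos.ne'.isUnit]
    _ = (T σ * ((T σ)⁻¹ * (T ρ * T ρ) * (T σ)⁻¹)).trace := hadj.trace_mul_apply _ _
    _ = (T ρ * T ρ * (T σ)⁻¹).trace := trace_mul_inv_mul_mul_inv hTσ.det_pos.ne'.isUnit _

theorem symmetric_recovery_implies_trace_identity
    (T : Matrix H H ℂ →ₗ[ℂ] Matrix K K ℂ) (Tad : Matrix K K ℂ →ₗ[ℂ] Matrix H H ℂ)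
    (hCP : IsCompletelyPositive T) (hTP : IsTracePreserving T)
    (hadj : IsAdjointPair T Tad)
    (ρ σ : Matrix H H ℂ)
    (hρ : ρ.PosSemidef) (hσ : σ.PosDef) (hTσ : (T σ).PosDef)
    (hrec : ρ * ρ = σ * Tad ((T σ)⁻¹ * (T ρ * T ρ) * (T σ)⁻¹) * σ) :
    (ρ * ρ * σ⁻¹).trace = (T ρ * T ρ * (T σ)⁻¹).trace :=
  symmetric_recovery_implies_trace_identity_general T Tad hadj ρ σ hσ hTσ hrec

end BSQMC
end
end

section
/- Let N : B(H) → B(K) be a completely positive unital map written as N(X) = tr_E[V X V*] for an operator V : H → K ⊗ H_E with tr_E[V V*] = I_K. Let X = X* ∈ B(H) and suppose N(X^2) = N(X)^2. Then (N(X) ⊗ I_E) V = V X. -/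
open Matrix BigOperators
open scoped Kronecker ComplexOrder

noncomputable section

namespace BSQMC

set_option linter.unusedSectionVars false

variable {H K E : Type*} [Fintype H] [DecidableEq H] [Fintype K] [DecidableEq K]
  [Fintype E] [DecidableEq E]

/-- Partial trace over the environment `E`. -/
def ptE (M : Matrix (K × E) (K × E) ℂ) : Matrix K K ℂ :=
  Matrix.of fun k k' => ∑ e : E, M (k, e) (k', e)

/-- The map `N(X) = tr_E [V X V*]`. -/
def Nmap (V : Matrix (K × E) H ℂ) (X : Matrix H H ℂ) : Matrix K K ℂ :=
  ptE (V * X * Vᴴ)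

lemma ptE_kron_mul (Y : Matrix K K ℂ) (A : Matrix (K × E) (K × E) ℂ) :
    ptE ((Y ⊗ₖ (1 : Matrix E E ℂ)) * A) = Y * ptE A := by
  ext k k'
  simp [ptE, Matrix.mul_apply, Fintype.sum_prod_type, Matrix.one_apply, mul_ite, ite_mul,
    Finset.mul_sum]
  rw [Finset.sum_comm]

lemma ptE_mul_kron (Y : Matrix K K ℂ) (A : Matrix (K × E) (K × E) ℂ) :
    ptE (A * (Y ⊗ₖ (1 : Matrix E E ℂ))) = ptE A * Y := by
  ext k k'
  simp [ptE, Matrix.mul_apply, Fintype.sum_prod_type, Matrix.one_apply, mul_ite, ite_mul,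
    Finset.sum_mul]
  rw [Finset.sum_comm]

lemma trace_ptE (A : Matrix (K × E) (K × E) ℂ) : (ptE A).trace = A.trace := by
  simp [ptE, Matrix.trace, Matrix.diag, Fintype.sum_prod_type]

lemma ptE_conjTranspose (A : Matrix (K × E) (K × E) ℂ) : (ptE A)ᴴ = ptE Aᴴ := by
  ext k k'
  simp [ptE, Matrix.conjTranspose_apply]

lemma kron_one_conjTranspose (Y : Matrix K K ℂ) :
    (Y ⊗ₖ (1 : Matrix E E ℂ))ᴴ = Yᴴ ⊗ₖ (1 : Matrix E E ℂ) := by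
  ext ⟨k, e⟩ ⟨k', e'⟩
  by_cases h : e = e' <;> simp [Matrix.conjTranspose_apply, Matrix.one_apply, h, eq_comm]

lemma trace_conjTranspose_mul_self_eq_zero' {m n : Type*} [Fintype m] [Fintype n]
    (A : Matrix m n ℂ) (h : (Aᴴ * A).trace = 0) : A = 0 := by
  have h2 : ∑ j : n, ∑ i : m, Complex.normSq (A i j) = 0 := by
    have := congrArg Complex.re h
    simpa [Matrix.trace, Matrix.diag, Matrix.mul_apply, Matrix.conjTranspose_apply,
      Complex.normSq_eq_conj_mul_self, Complex.re_sum, Complex.normSq_apply] using this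
  ext i j
  have hj := (Finset.sum_eq_zero_iff_of_nonneg (fun j _ => Finset.sum_nonneg
    (fun i _ => Complex.normSq_nonneg _))).mp h2 j (Finset.mem_univ j)
  have hi := (Finset.sum_eq_zero_iff_of_nonneg
    (fun i _ => Complex.normSq_nonneg _)).mp hj i (Finset.mem_univ i)
  simpa using Complex.normSq_eq_zero.mp hi

theorem multiplicative_implies_intertwining
    (V : Matrix (K × E) H ℂ)
    (hunital : ptE (V * Vᴴ) = 1)
    (X : Matrix H H ℂ) (hX : Xᴴ = X)
    (hmul : Nmap V (X * X) = Nmap V X * Nmap V X) :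
    (Nmap V X ⊗ₖ (1 : Matrix E E ℂ)) * V = V * X := by
  set N := Nmap V X with hNdef
  have hNN : ptE (V * X * Vᴴ) = N := by rw [hNdef]; rfl
  have hN : Nᴴ = N := by
    rw [hNdef, Nmap, ptE_conjTranspose]
    rw [show (V * X * Vᴴ)ᴴ = V * X * Vᴴ by
      simp [Matrix.conjTranspose_mul, hX, Matrix.mul_assoc]]
  set Z : Matrix (K × E) H ℂ := (N ⊗ₖ (1 : Matrix E E ℂ)) * V - V * X with hZ
  have hZconj : Zᴴ = Vᴴ * (N ⊗ₖ (1 : Matrix E E ℂ)) - X * Vᴴ := by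
    rw [hZ, Matrix.conjTranspose_sub, Matrix.conjTranspose_mul, Matrix.conjTranspose_mul,
      kron_one_conjTranspose, hN, hX]
  have key : ∀ A : Matrix (K × E) (K × E) ℂ,
      ((N ⊗ₖ (1 : Matrix E E ℂ)) * A).trace = (N * ptE A).trace := by
    intro A
    rw [← trace_ptE, ptE_kron_mul]
  have t1 : (Vᴴ * (N ⊗ₖ (1 : Matrix E E ℂ)) * ((N ⊗ₖ (1 : Matrix E E ℂ)) * V)).trace
      = (N * N).trace := by
    rw [Matrix.trace_mul_comm]
    simp only [Matrix.mul_assoc]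
    rw [key, show V * (Vᴴ * ((N : Matrix K K ℂ) ⊗ₖ (1 : Matrix E E ℂ)))
        = (V * Vᴴ) * (N ⊗ₖ (1 : Matrix E E ℂ)) by rw [Matrix.mul_assoc],
      ptE_mul_kron, hunital, one_mul]
  have t2 : (Vᴴ * (N ⊗ₖ (1 : Matrix E E ℂ)) * (V * X)).trace = (N * N).trace := by
    rw [Matrix.trace_mul_comm]
    simp only [Matrix.mul_assoc]
    rw [show V * (X * (Vᴴ * ((N : Matrix K K ℂ) ⊗ₖ (1 : Matrix E E ℂ))))
        = (V * X * Vᴴ) * (N ⊗ₖ (1 : Matrix E E ℂ)) by simp only [Matrix.mul_assoc],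
      ← trace_ptE, ptE_mul_kron, hNN, Matrix.trace_mul_comm]
  have t3 : (X * Vᴴ * ((N ⊗ₖ (1 : Matrix E E ℂ)) * V)).trace = (N * N).trace := by
    rw [Matrix.trace_mul_comm]
    simp only [Matrix.mul_assoc]
    rw [key, show V * (X * Vᴴ) = V * X * Vᴴ by rw [Matrix.mul_assoc], hNN]
  have t4 : (X * Vᴴ * (V * X)).trace = (N * N).trace := by
    rw [Matrix.trace_mul_comm]
    simp only [Matrix.mul_assoc]
    rw [show V * (X * (X * Vᴴ)) = V * (X * X) * Vᴴ by simp only [Matrix.mul_assoc],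
      ← trace_ptE]
    have : ptE (V * (X * X) * Vᴴ) = Nmap V (X * X) := rfl
    rw [this, hmul]
  have htr : (Zᴴ * Z).trace = 0 := by
    rw [hZconj, hZ, Matrix.sub_mul, Matrix.mul_sub, Matrix.mul_sub, Matrix.trace_sub,
      Matrix.trace_sub, Matrix.trace_sub, t1, t2, t3, t4]
    ring
  have hZ0 : Z = 0 := trace_conjTranspose_mul_self_eq_zero' Z htr
  exact sub_eq_zero.mp (hZ ▸ hZ0)

end BSQMC
end
end

section
/- Let N(X) = tr_E[V X V*] be a completely positive unital map B(H) → B(K) (so tr_E[VV*] = I_K), X = X* ∈ B(H), and Y = Y* ∈ B(K) such that (Y ⊗ I_E) V = V X. Then Y = N(X), N(X^2) = N(X)^2, and Y ⊗ I_E commutes with V V*. -/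
/-! Tracing out `E` in `(Y ⊗ I) V Z V* = V X Z V*` gives `N(X Z) = Y N(Z)` for every `Z`:
`Z = I` and unitality give `Y = N(X)`, and `Z = X` gives `N(X²) = N(X)²`. Taking adjoints
of the intertwining relation gives `V* (Y ⊗ I) = X V*`, so both `(Y ⊗ I) V V*` and
`V V* (Y ⊗ I)` equal `V X V*`. -/

open Matrix BigOperators
open scoped Kronecker ComplexOrder

noncomputable section

namespace BSQMC

variable {H K E : Type*} [Fintype H] [DecidableEq H] [Fintype K] [DecidableEq K]
  [Fintype E] [DecidableEq E]

omit [DecidableEq K] in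
theorem ptE_kronecker_one_mul (Y : Matrix K K ℂ) (M : Matrix (K × E) (K × E) ℂ) :
    ptE ((Y ⊗ₖ (1 : Matrix E E ℂ)) * M) = Y * ptE M := by
  ext k k'
  simp only [ptE, mul_apply, of_apply, Fintype.sum_prod_type, kroneckerMap_apply, one_apply,
    mul_ite, mul_one, mul_zero, ite_mul, zero_mul, Finset.sum_ite_eq, Finset.mem_univ, if_true,
    Finset.mul_sum]
  exact Finset.sum_comm

theorem commute_mul_conjTranspose_of_mul_eq {m n α : Type*} [Fintype m] [Fintype n]
    [CommSemiring α] [StarRing α] {A : Matrix m m α} {V : Matrix m n α} {X : Matrix n n α}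
    (hA : A.IsHermitian) (hX : X.IsHermitian) (h : A * V = V * X) :
    Commute A (V * Vᴴ) := by
  have h' : Vᴴ * A = X * Vᴴ := by
    simpa only [conjTranspose_mul, hA.eq, hX.eq] using congrArg conjTranspose h
  calc A * (V * Vᴴ) = V * X * Vᴴ := by rw [← Matrix.mul_assoc, h]
    _ = V * Vᴴ * A := by rw [Matrix.mul_assoc, Matrix.mul_assoc, h']

omit [DecidableEq H] [DecidableEq K] in
theorem Nmap_mul_of_kronecker_one_mul_eq {V : Matrix (K × E) H ℂ} {X : Matrix H H ℂ}
    {Y : Matrix K K ℂ}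
    (h : (Y ⊗ₖ (1 : Matrix E E ℂ)) * V = V * X) (Z : Matrix H H ℂ) :
    Nmap V (X * Z) = Y * Nmap V Z := by
  rw [Nmap, Nmap, ← Matrix.mul_assoc V, ← h, Matrix.mul_assoc, Matrix.mul_assoc,
    ptE_kronecker_one_mul, Matrix.mul_assoc]

theorem intertwining_implies_multiplicative
    (V : Matrix (K × E) H ℂ)
    (hunital : ptE (V * Vᴴ) = 1)
    (X : Matrix H H ℂ) (hX : Xᴴ = X)
    (Y : Matrix K K ℂ) (hY : Yᴴ = Y)
    (hint : (Y ⊗ₖ (1 : Matrix E E ℂ)) * V = V * X) :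
    Y = Nmap V X ∧ Nmap V (X * X) = Nmap V X * Nmap V X ∧
      Commute (Y ⊗ₖ (1 : Matrix E E ℂ)) (V * Vᴴ) := by
  have hY_eq : Y = Nmap V X := by
    calc Y = Y * ptE (V * Vᴴ) := by rw [hunital, Matrix.mul_one]
      _ = Y * Nmap V 1 := by rw [Nmap, Matrix.mul_one]
      _ = Nmap V (X * 1) := (Nmap_mul_of_kronecker_one_mul_eq hint 1).symm
      _ = Nmap V X := by rw [Matrix.mul_one]
  refine ⟨hY_eq, ?_, ?_⟩
  · rw [Nmap_mul_of_kronecker_one_mul_eq hint, ← hY_eq]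
  · have hYE : (Y ⊗ₖ (1 : Matrix E E ℂ)).IsHermitian := by
      rw [IsHermitian, conjTranspose_kronecker, hY, conjTranspose_one]
    exact commute_mul_conjTranspose_of_mul_eq hYE hX hint

end BSQMC
end
end
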